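/- arXiv:0707.3169 — 13 statements merged into one kernel-verified Lean document; each statement's English description precedes it below -/
import Mathlib

section
/- For a nonincreasing summable sequence ξ of nonnegative reals and any integer m ≥ 2, the m-fold ampliation of the arithmetic mean at infinity is dominated by the arithmetic mean at infinity of the m-fold ampliation: (D_m ξ_{a∞})_j ≤ ((D_m ξ)_{a∞})_j for all j ≥ 1. -/
open scoped BigOperators
open Filter

noncomputable def ainf (f : ℕ → ℝ) (n : ℕ) : ℝ := (1 / (n : ℝ)) * ∑' k : ℕ, f (n + 1 + k)

noncomputable def ces (f : ℕ → ℝ) (n : ℕ) : ℝ := (1 / (n : ℝ)) * ∑ j ∈ Finset.Icc 1 n, f j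

noncomputable def ampl (m : ℕ) (f : ℕ → ℝ) (j : ℕ) : ℝ := f ((j + m - 1) / m)

/-! With `n = ⌈j / m⌉` we have `(D_m ξ_{a∞})_j = ξ_{a∞}(n)`. The entries of `D_m ξ` beyond
`m n` are those of `ξ` beyond `n`, each repeated `m` times, so their sum is `m` times the tail
of `ξ` beyond `n`. Since `j ≤ m n` and the entries are nonnegative, the tail of `D_m ξ` beyond
`j` is at least as large, and `1 / j ≥ 1 / (m n)`. -/

theorem hasSum_comp_fst {α β M : Type*} [AddCommMonoid M] [TopologicalSpace M] [ContinuousAdd M]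
    [Fintype β] {f : α → M} {s : M} (hf : HasSum f s) :
    HasSum (fun p : α × β => f p.1) (Fintype.card β • s) := by
  classical
  have hfiber : ∀ b : β, HasSum (fun p : α × β => if p.2 = b then f p.1 else 0) s := by
    intro b
    rw [← (Prod.mk_left_injective b).hasSum_iff]
    · simpa [Function.comp_def] using hf
    · rintro ⟨a, b'⟩ hab
      simp only [ite_eq_right_iff]
      rintro rfl
      exact absurd ⟨a, rfl⟩ hab
  simpa using hasSum_sum (s := Finset.univ) fun b _ => hfiber b

theorem tsum_nat_add_le_of_le {g : ℕ → ℝ} {a b : ℕ} (hab : a ≤ b) (hg : ∀ k, a ≤ k → 0 ≤ g k)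
    (hsum : Summable fun k => g (b + k)) : ∑' k, g (b + k) ≤ ∑' k, g (a + k) := by
  have hsum' : Summable fun k => g (a + k) := by
    simp_rw [add_comm a, summable_nat_add_iff]
    simpa only [add_comm b, summable_nat_add_iff] using hsum
  refine hsum.tsum_le_tsum_of_inj (b - a + ·) (add_right_injective _) (fun k _ => hg _ (by omega))
    (fun k => ?_) hsum'
  rw [← add_assoc, Nat.add_sub_cancel' hab]

theorem one_le_ceilDiv {j m : ℕ} (hj : 1 ≤ j) (hm : 0 < m) : 1 ≤ j ⌈/⌉ m := by
  by_contra! h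
  have := (ceilDiv_le_iff_le_mul hm).1 (Nat.lt_one_iff.1 h).le
  omega

theorem ampl_mul_add_add_one {m : ℕ} (hm : 0 < m) (f : ℕ → ℝ) {q r : ℕ} (hr : r < m) :
    ampl m f (m * q + r + 1) = f (q + 1) := by
  rw [ampl, show m * q + r + 1 + m - 1 = m * (q + 1) + r by ring_nf; omega,
    Nat.mul_add_div hm, Nat.div_eq_of_lt hr, add_zero]

theorem HasSum.ampl_tail {m : ℕ} (hm : 0 < m) {f : ℕ → ℝ} {n : ℕ} {s : ℝ}
    (hf : HasSum (fun k => f (n + 1 + k)) s) :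
    HasSum (fun k => ampl m f (m * n + 1 + k)) (m * s) := by
  have : NeZero m := ⟨hm.ne'⟩
  rw [← (Nat.divModEquiv m).symm.hasSum_iff]
  convert hasSum_comp_fst (β := Fin m) hf using 1
  · funext ⟨q, r⟩
    simp only [Function.comp_apply, Nat.divModEquiv_symm_apply]
    rw [show m * n + 1 + (q * m + r) = m * (n + q) + r + 1 by ring,
      ampl_mul_add_add_one hm f r.isLt, add_right_comm]
  · simp [nsmul_eq_mul]

theorem stmt_0_general (ξ : ℕ → ℝ)
    (hnn : ∀ n, 1 ≤ n → 0 ≤ ξ n)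
    (hsum : Summable ξ)
    (m : ℕ) (hm : 2 ≤ m) (j : ℕ) (hj : 1 ≤ j) :
    ampl m (ainf ξ) j ≤ ainf (ampl m ξ) j := by
  have hm0 : 0 < m := by omega
  set n := j ⌈/⌉ m
  have hjn : j ≤ m * n := le_smul_ceilDiv hm0
  set T := ∑' k, ξ (n + 1 + k)
  have htail : HasSum (fun k => ampl m ξ (m * n + 1 + k)) (m * T) := by
    refine HasSum.ampl_tail hm0 (Summable.hasSum ?_)
    simpa only [add_comm (n + 1)] using (summable_nat_add_iff (n + 1)).2 hsum
  have hcmp : m * T ≤ ∑' k, ampl m ξ (j + 1 + k) :=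
    htail.tsum_eq ▸ tsum_nat_add_le_of_le (by omega)
      (fun k hk => hnn _ (one_le_ceilDiv (by omega) hm0)) htail.summable
  have hT : 0 ≤ T := tsum_nonneg fun k => hnn _ (by omega)
  have hj0 : (0 : ℝ) < j := by exact_mod_cast hj
  calc ampl m (ainf ξ) j = 1 / ((m : ℝ) * n) * (m * T) := by
        show 1 / (n : ℝ) * T = _
        field_simp
    _ ≤ 1 / (j : ℝ) * (m * T) := by gcongr; exact_mod_cast hjn
    _ ≤ ainf (ampl m ξ) j := by rw [ainf]; gcongr

theorem stmt_0 (ξ : ℕ → ℝ)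
    (hmono : ∀ n, 1 ≤ n → ξ (n + 1) ≤ ξ n)
    (hnn : ∀ n, 1 ≤ n → 0 ≤ ξ n)
    (hsum : Summable ξ)
    (m : ℕ) (hm : 2 ≤ m) (j : ℕ) (hj : 1 ≤ j) :
    ampl m (ainf ξ) j ≤ ainf (ampl m ξ) j :=
  stmt_0_general ξ hnn hsum m hm j hj
end

section
/- For a nonincreasing summable sequence ξ of nonnegative reals and any integer m ≥ 2, one has (D_m ξ_{a∞})_j ≥ ((D_{m-1} ξ)_{a∞})_j for all j ≥ (m-1)(m-2). -/
open scoped BigOperators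
open Filter

/-!
Write `q = m - 1`, `n = ⌈j / m⌉`, and let `i = ⌊j / q⌋ + 1` be the block of `D_q ξ` containing
position `j + 1`. The tail of `D_q ξ` after `j` is `q - j % q` copies of `ξ_i` followed by `q`
copies of each `ξ_k`, `k > i`; the tail of `ξ` after `n` is `ξ_{n+1}, …, ξ_i`, all `≥ ξ_i`,
followed by each `ξ_k`, `k > i`, once. The hypothesis `(m - 1)(m - 2) ≤ j` gives `q n ≤ j`, and
this one inequality bounds `n` times the first tail by `j` times the second, separately for the
copies of `ξ_i` and for the rest.
-/

theorem Summable.hasSum_comp_div {f : ℕ → ℝ} (hf : Summable f) (q : ℕ) [NeZero q] :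
    HasSum (fun k ↦ f (k / q)) (q * ∑' k, f k) := by
  have hprod := hf.hasSum.mul (hasSum_fintype fun _ : Fin q ↦ (1 : ℝ))
    (summable_mul_of_summable_norm (g := fun _ : Fin q ↦ (1 : ℝ)) hf.norm .of_finite)
  rw [← (Nat.divModEquiv q).hasSum_iff] at hprod
  simpa [Function.comp_def, mul_comm] using hprod

theorem ampl_mul_add_add_one_s1 (f : ℕ → ℝ) {q : ℕ} (hq : 0 < q) (i s : ℕ) :
    ampl q f (q * i + s + 1) = f (i + 1 + s / q) := by
  rw [ampl, show q * i + s + 1 + q - 1 = s + q * (i + 1) by rw [Nat.mul_succ]; omega,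
    Nat.add_mul_div_left _ _ hq, add_comm]

theorem hasSum_ampl_mul_add {f : ℕ → ℝ} (hf : Summable f) {q : ℕ} (hq : 0 < q) (i : ℕ) :
    HasSum (fun k ↦ ampl q f (q * i + k + 1)) (q * ∑' k, f (i + 1 + k)) := by
  have : NeZero q := ⟨hq.ne'⟩
  have htail : Summable fun k ↦ f (i + 1 + k) := by
    simpa only [add_comm] using (summable_nat_add_iff (i + 1)).2 hf
  simpa only [ampl_mul_add_add_one_s1 f hq] using htail.hasSum_comp_div q

theorem tsum_ampl_add_one_add {f : ℕ → ℝ} (hf : Summable f) {q : ℕ} (hq : 0 < q) {j i s : ℕ}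
    (hj : j = q * i + s) (hs : s < q) :
    ∑' k, ampl q f (j + 1 + k) = (q - s : ℕ) * f (i + 1) + q * ∑' k, f (i + 1 + 1 + k) := by
  have hshift : ∀ k, j + 1 + (k + (q - s)) = q * (i + 1) + k + 1 := fun k ↦ by
    rw [Nat.mul_succ]; omega
  have htail : HasSum (fun k ↦ ampl q f (j + 1 + (k + (q - s)))) (q * ∑' k, f (i + 1 + 1 + k)) := by
    simpa only [hshift] using hasSum_ampl_mul_add hf hq (i + 1)
  have hhead : ∀ k ∈ Finset.range (q - s), ampl q f (j + 1 + k) = f (i + 1) := by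
    intro k hk
    rw [show j + 1 + k = q * i + (s + k) + 1 by omega, ampl_mul_add_add_one_s1 f hq,
      Nat.div_eq_of_lt (by have := Finset.mem_range.1 hk; omega), add_zero]
  have hsum : Summable fun k ↦ ampl q f (j + 1 + k) :=
    (summable_nat_add_iff (f := fun k ↦ ampl q f (j + 1 + k)) (q - s)).1 htail.summable
  rw [← hsum.sum_add_tsum_nat_add (q - s),
    htail.tsum_eq, Finset.sum_congr rfl hhead, Finset.sum_const, Finset.card_range, nsmul_eq_mul]

theorem tsum_tail_ge_of_antitoneOn {f : ℕ → ℝ} (hf : AntitoneOn f (Set.Ici 1)) (hs : Summable f)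
    {n i : ℕ} (hni : n ≤ i) :
    (i - n : ℕ) * f i + ∑' k, f (i + 1 + k) ≤ ∑' k, f (n + 1 + k) := by
  have htail : Summable fun k ↦ f (n + 1 + k) := by
    simpa only [add_comm] using (summable_nat_add_iff (n + 1)).2 hs
  rw [← htail.sum_add_tsum_nat_add (i - n)]
  have hshift : ∀ k, n + 1 + (k + (i - n)) = i + 1 + k := fun k ↦ by omega
  simp only [hshift]
  gcongr
  calc ((i - n : ℕ) : ℝ) * f i = ∑ _k ∈ Finset.range (i - n), f i := by simp
    _ ≤ ∑ k ∈ Finset.range (i - n), f (n + 1 + k) := by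
      gcongr with k hk
      have := Finset.mem_range.1 hk
      exact hf (Set.mem_Ici.2 (by omega)) (Set.mem_Ici.2 (by omega)) (by omega)

theorem pred_mul_ceil_div_le {m j : ℕ} (hj : (m - 1) * (m - 2) ≤ j) :
    (m - 1) * ((j + m - 1) / m) ≤ j := by
  rcases lt_or_ge ((j + m - 1) / m) (m - 1) with h | h
  · exact le_trans (Nat.mul_le_mul_left _ (by omega)) hj
  · have := Nat.div_mul_le_self (j + m - 1) m
    rw [Nat.sub_one_mul, mul_comm]
    omega

theorem block_average_le {a T : ℝ} (ha : 0 ≤ a) (hT : 0 ≤ T) {q n j : ℕ} (hq : 0 < q)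
    (hn : 0 < n) (hqn : q * n ≤ j) :
    1 / (j : ℝ) * ((q - j % q : ℕ) * a + q * T) ≤ 1 / (n : ℝ) * ((j / q + 1 - n : ℕ) * a + T) := by
  have hni : n ≤ j / q := (Nat.le_div_iff_mul_le hq).2 (by linarith)
  -- adding `n * j = n * (q * (j / q) + j % q)` to both sides gives `hqn` times `j / q + 1`
  have hcount : n * (q - j % q) ≤ j * (j / q + 1 - n) := by
    have hdiv := Nat.div_add_mod j q
    have hmod := Nat.mod_lt j hq
    have : n * (q * (j / q + 1)) ≤ j * (j / q + 1) := by nlinarith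
    zify [hmod.le, hni.trans (Nat.le_succ _)] at this ⊢
    nlinarith
  have hjR : (0 : ℝ) < j := by exact_mod_cast hn.trans_le (le_of_mul_le_of_one_le_right hqn hq)
  have hnR : (0 : ℝ) < n := by exact_mod_cast hn
  have hcountR : (n : ℝ) * (q - j % q : ℕ) ≤ j * (j / q + 1 - n : ℕ) := by exact_mod_cast hcount
  have hqnR : (q : ℝ) * n ≤ j := by exact_mod_cast hqn
  rw [one_div_mul_eq_div, one_div_mul_eq_div, div_le_div_iff₀ hjR hnR]
  nlinarith [mul_le_mul_of_nonneg_right hcountR ha, mul_le_mul_of_nonneg_right hqnR hT]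

theorem stmt_1 (ξ : ℕ → ℝ)
    (hmono : ∀ n, 1 ≤ n → ξ (n + 1) ≤ ξ n)
    (hnn : ∀ n, 1 ≤ n → 0 ≤ ξ n)
    (hsum : Summable ξ)
    (m : ℕ) (hm : 2 ≤ m) (j : ℕ) (hj : 1 ≤ j) (hj' : (m - 1) * (m - 2) ≤ j) :
    ainf (ampl (m - 1) ξ) j ≤ ampl m (ainf ξ) j := by
  set q := m - 1
  set n := (j + m - 1) / m
  have hq : 0 < q := by omega
  have hn : 0 < n := Nat.div_pos (by omega) (by omega)
  have hqn : q * n ≤ j := pred_mul_ceil_div_le hj'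
  have hni : n ≤ j / q + 1 := ((Nat.le_div_iff_mul_le hq).2 (by linarith)).trans (Nat.le_succ _)
  have ha : 0 ≤ ξ (j / q + 1) := hnn _ (by omega)
  have hT : 0 ≤ ∑' k, ξ (j / q + 1 + 1 + k) := tsum_nonneg fun k ↦ hnn _ (by omega)
  change _ ≤ ainf ξ n
  rw [ainf, ainf, tsum_ampl_add_one_add hsum hq (Nat.div_add_mod j q).symm (Nat.mod_lt j hq)]
  calc _ ≤ 1 / (n : ℝ) * ((j / q + 1 - n : ℕ) * ξ (j / q + 1) + ∑' k, ξ (j / q + 1 + 1 + k)) :=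
        block_average_le ha hT hq hn hqn
    _ ≤ _ := by
      gcongr
      exact tsum_tail_ge_of_antitoneOn (antitoneOn_nat_Ici_of_succ_le hmono) hsum hni
end

section
/- For a nonincreasing summable sequence ξ of nonnegative reals and any integer m ≥ 2, one has (D_m ξ_{a∞})_j ≥ (1/(2(m-1))) (D_{m-1} ξ)_j for all j ≥ 2m(m-1). -/
open scoped BigOperators
open Filter

/-!
The two ampliations read the indices n = ⌈j/m⌉ and p = ⌈j/(m-1)⌉. The tail ∑_{k>n} ξ_k contains
the p - n terms ξ_{n+1}, …, ξ_p, each at least ξ_p, so (ξ_{a∞})_n ≥ ((p - n)/n) ξ_p. For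
j ≥ 2m(m-1) the rounding in the two ceilings is small enough that (2m-1) n ≤ 2(m-1) p, which is
(p - n)/n ≥ 1/(2(m-1)).
-/

theorem sub_mul_le_tsum_nat_add {ξ : ℕ → ℝ} (hanti : AntitoneOn ξ (Set.Ici 1))
    (hnn : ∀ n, 1 ≤ n → 0 ≤ ξ n) (hsum : Summable ξ) (n p : ℕ) :
    ((p - n : ℕ) : ℝ) * ξ p ≤ ∑' k, ξ (n + 1 + k) := by
  have htail : Summable (fun k => ξ (n + 1 + k)) := by
    simpa only [add_comm] using (summable_nat_add_iff (n + 1)).mpr hsum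
  calc ((p - n : ℕ) : ℝ) * ξ p = (Finset.range (p - n)).card • ξ p := by simp
    _ ≤ ∑ k ∈ Finset.range (p - n), ξ (n + 1 + k) :=
        Finset.card_nsmul_le_sum _ _ _ fun k hk => by
          have hkp := Finset.mem_range.mp hk
          exact hanti (Set.mem_Ici.mpr (by omega)) (Set.mem_Ici.mpr (by omega)) (by omega)
    _ ≤ ∑' k, ξ (n + 1 + k) := htail.sum_le_tsum _ fun k _ => hnn _ (by omega)

theorem two_mul_sub_one_mul_ceilDiv_le {m j : ℕ} (hm : 2 ≤ m) (hj : 2 * m * (m - 1) ≤ j) :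
    (2 * m - 1) * ((j + m - 1) / m) ≤ 2 * (m - 1) * ((j + (m - 1) - 1) / (m - 1)) := by
  obtain ⟨d, rfl⟩ : ∃ d, m = d + 1 := ⟨m - 1, by omega⟩
  simp only [Nat.add_sub_cancel] at hj ⊢
  have hn := Nat.div_mul_le_self (j + (d + 1) - 1) (d + 1)
  have hp := Nat.lt_div_mul_add (a := j + d - 1) (b := d) (by omega)
  set n := (j + (d + 1) - 1) / (d + 1)
  set p := (j + d - 1) / d
  have hn' : n * (d + 1) ≤ j + d := by omega
  have hp' : j ≤ p * d := by omega
  refine Nat.le_of_mul_le_mul_right (c := d + 1) ?_ (by omega)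
  calc (2 * (d + 1) - 1) * n * (d + 1) = (2 * d + 1) * (n * (d + 1)) := by
        rw [show 2 * (d + 1) - 1 = 2 * d + 1 by omega]; ring
    _ ≤ (2 * d + 1) * (j + d) := Nat.mul_le_mul_left _ hn'
    _ ≤ 2 * (d + 1) * j := by nlinarith
    _ ≤ 2 * d * p * (d + 1) := by nlinarith

theorem stmt_2 (ξ : ℕ → ℝ)
    (hmono : ∀ n, 1 ≤ n → ξ (n + 1) ≤ ξ n)
    (hnn : ∀ n, 1 ≤ n → 0 ≤ ξ n)
    (hsum : Summable ξ)
    (m : ℕ) (hm : 2 ≤ m) (j : ℕ) (hj : 2 * m * (m - 1) ≤ j) :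
    (1 / (2 * ((m : ℝ) - 1))) * ampl (m - 1) ξ j ≤ ampl m (ainf ξ) j := by
  set n := (j + m - 1) / m
  set p := (j + (m - 1) - 1) / (m - 1)
  have hj0 : 0 < 2 * m * (m - 1) := Nat.mul_pos (by omega) (by omega)
  have hn : 1 ≤ n := (Nat.le_div_iff_mul_le (by omega)).mpr (by omega)
  have hcount : (2 * (m : ℝ) - 1) * n ≤ 2 * ((m : ℝ) - 1) * p := by
    have := Nat.cast_le (α := ℝ) |>.mpr (two_mul_sub_one_mul_ceilDiv_le hm hj)
    push_cast [Nat.cast_sub (show 1 ≤ m by omega), Nat.cast_sub (show 1 ≤ 2 * m by omega)] at this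
    exact this
  have hmR : (2 : ℝ) ≤ m := by exact_mod_cast hm
  have hnR : (1 : ℝ) ≤ n := by exact_mod_cast hn
  have hkey : (n : ℝ) ≤ 2 * ((m : ℝ) - 1) * (p - n) := by linarith
  have hnp : n ≤ p := by
    have : (n : ℝ) ≤ p := by nlinarith
    exact_mod_cast this
  have hcoef : 1 / (2 * ((m : ℝ) - 1)) ≤ 1 / n * ((p - n : ℕ) : ℝ) := by
    rw [Nat.cast_sub hnp, one_div_mul_eq_div, div_le_div_iff₀ (by linarith) (by linarith)]
    linarith
  calc 1 / (2 * ((m : ℝ) - 1)) * ξ p ≤ 1 / n * (((p - n : ℕ) : ℝ) * ξ p) := by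
        rw [← mul_assoc]; exact mul_le_mul_of_nonneg_right hcoef (hnn p (hn.trans hnp))
    _ ≤ 1 / n * ∑' k, ξ (n + 1 + k) :=
        mul_le_mul_of_nonneg_left
          (sub_mul_le_tsum_nat_add (antitoneOn_nat_Ici_of_succ_le hmono) hnn hsum n p)
          (by positivity)
end

section
/- For a nonincreasing summable sequence ξ of nonnegative reals and any integer m ≥ 2, ξ_{mj} ≤ (1/(m-1)) (ξ_{a∞})_j for all j ≥ 1. -/
/-! The `(m - 1) j` terms `ξ (j + 1), …, ξ (m j)` of the tail sum defining `ainf ξ j` each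
dominate `ξ (m j)`, and the remaining terms are nonnegative. -/

open scoped BigOperators
open Filter

lemma natCast_mul_le_tsum_tail_of_antitoneOn {f : ℕ → ℝ} (hf : AntitoneOn f {n | 1 ≤ n})
    (hnn : ∀ n, 1 ≤ n → 0 ≤ f n) (hs : Summable f) (a N : ℕ) :
    N * f (a + N) ≤ ∑' k, f (a + 1 + k) := by
  have hs' : Summable fun k ↦ f (a + 1 + k) :=
    ((summable_nat_add_iff (a + 1)).2 hs).congr fun k ↦ by rw [add_comm k]
  calc (N : ℝ) * f (a + N)
      = ∑ _k ∈ Finset.range N, f (a + N) := by simp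
    _ ≤ ∑ k ∈ Finset.range N, f (a + 1 + k) := by
        refine Finset.sum_le_sum fun k hk ↦ ?_
        rw [Finset.mem_range] at hk
        exact hf (show 1 ≤ a + 1 + k by omega) (show 1 ≤ a + N by omega) (by omega)
    _ ≤ ∑' k, f (a + 1 + k) := hs'.sum_le_tsum _ fun k _ ↦ hnn _ (by omega)

theorem stmt_3 (ξ : ℕ → ℝ)
    (hmono : ∀ n, 1 ≤ n → ξ (n + 1) ≤ ξ n)
    (hnn : ∀ n, 1 ≤ n → 0 ≤ ξ n)
    (hsum : Summable ξ)
    (m : ℕ) (hm : 2 ≤ m) (j : ℕ) (hj : 1 ≤ j) :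
    ξ (m * j) ≤ (1 / ((m : ℝ) - 1)) * ainf ξ j := by
  have hm1 : (0 : ℝ) < m - 1 := by
    have : (2 : ℝ) ≤ m := mod_cast hm
    linarith
  have hj0 : (0 : ℝ) < j := mod_cast hj
  have hmj : j + (m - 1) * j = m * j := by
    obtain ⟨m, rfl⟩ := Nat.exists_eq_add_of_le' (by omega : 1 ≤ m)
    simp only [Nat.add_sub_cancel]
    ring
  have key := natCast_mul_le_tsum_tail_of_antitoneOn
    (antitoneOn_nat_Ici_of_succ_le hmono) hnn hsum j ((m - 1) * j)
  rw [hmj, Nat.cast_mul, Nat.cast_sub (by omega), Nat.cast_one] at key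
  rw [ainf, ← mul_assoc, one_div_mul_one_div, one_div_mul_eq_div, le_div_iff₀ (by positivity)]
  linarith
end

section
/- If a nonincreasing summable sequence ξ of nonnegative reals satisfies the Δ_{1/2}-condition (there exists M with ξ_n ≤ M ξ_{2n} for all n), then its arithmetic mean at infinity ξ_{a∞} also satisfies the Δ_{1/2}-condition. -/
open scoped BigOperators
open Filter

/-!
Write `T n = ∑_{j > n} ξ j = n · ξ_{a∞}(n)`. Splitting off the block `n < j ≤ 2n` gives
`T n = (block) + T (2n)`. The block is at most `n ξ n ≤ n K² ξ (4n)` by monotonicity and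
two doubling steps `ξ m ≤ K ξ (2m)`, while `T (2n)` contains the `2n` terms `2n < j ≤ 4n`,
each at least `ξ (4n)`.
Hence `T n ≤ (1 + K²/2) T (2n)`, i.e. `ξ_{a∞}(n) ≤ (2 + K²) ξ_{a∞}(2n)`.
-/

open Finset

lemma natCast_mul_ainf (f : ℕ → ℝ) {n : ℕ} (hn : n ≠ 0) :
    (n : ℝ) * ainf f n = ∑' k, f (n + 1 + k) := by
  unfold ainf
  field_simp

section AntitoneTail

variable {ξ : ℕ → ℝ}

lemma tsum_add_eq_sum_add_tsum (hsum : Summable ξ) (a m : ℕ) :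
    ∑' k, ξ (a + k) = ∑ k ∈ range m, ξ (a + k) + ∑' k, ξ (a + m + k) := by
  have hshift : Summable fun k => ξ (a + k) := hsum.comp_injective (add_right_injective a)
  rw [← hshift.sum_add_tsum_nat_add m]
  exact congrArg _ (tsum_congr fun k => congrArg ξ (by omega))

lemma sum_range_le_mul_of_antitoneOn (hanti : AntitoneOn ξ (Set.Ici 1)) {n : ℕ} (hn : 1 ≤ n)
    (m : ℕ) : ∑ k ∈ range m, ξ (n + 1 + k) ≤ m * ξ n := by
  calc ∑ k ∈ range m, ξ (n + 1 + k) ≤ ∑ _k ∈ range m, ξ n :=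
        sum_le_sum fun k _ => hanti (Set.mem_Ici.2 hn) (Set.mem_Ici.2 (by omega)) (by omega)
    _ = m * ξ n := by rw [sum_const, card_range, nsmul_eq_mul]

lemma mul_le_sum_range_of_antitoneOn (hanti : AntitoneOn ξ (Set.Ici 1)) (n m : ℕ) :
    m * ξ (n + m) ≤ ∑ k ∈ range m, ξ (n + 1 + k) := by
  calc (m : ℝ) * ξ (n + m) = ∑ _k ∈ range m, ξ (n + m) := by
        rw [sum_const, card_range, nsmul_eq_mul]
    _ ≤ ∑ k ∈ range m, ξ (n + 1 + k) := sum_le_sum fun k hk => by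
        have := mem_range.1 hk
        exact hanti (Set.mem_Ici.2 (by omega)) (Set.mem_Ici.2 (by omega)) (by omega)

lemma le_sq_mul_four_mul {K : ℝ} (hK0 : 0 ≤ K) (hK : ∀ n, 1 ≤ n → ξ n ≤ K * ξ (2 * n))
    {n : ℕ} (hn : 1 ≤ n) : ξ n ≤ K ^ 2 * ξ (4 * n) :=
  calc ξ n ≤ K * ξ (2 * n) := hK n hn
    _ ≤ K * (K * ξ (2 * (2 * n))) := mul_le_mul_of_nonneg_left (hK _ (by omega)) hK0
    _ = K ^ 2 * ξ (4 * n) := by rw [show 2 * (2 * n) = 4 * n by ring]; ring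

theorem tsum_tail_le_mul_tsum_tail_two_mul (hanti : AntitoneOn ξ (Set.Ici 1))
    (hnn : ∀ n, 1 ≤ n → 0 ≤ ξ n) (hsum : Summable ξ) {C : ℝ} (hC0 : 0 ≤ C)
    (hC : ∀ n, 1 ≤ n → ξ n ≤ C * ξ (4 * n)) {n : ℕ} (hn : 1 ≤ n) :
    ∑' k, ξ (n + 1 + k) ≤ (1 + C / 2) * ∑' k, ξ (2 * n + 1 + k) := by
  set T := ∑' k, ξ (2 * n + 1 + k)
  have hfar : (2 * n : ℕ) * ξ (2 * n + 2 * n) ≤ T :=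
    (mul_le_sum_range_of_antitoneOn hanti (2 * n) (2 * n)).trans <|
      (hsum.comp_injective (add_right_injective _)).sum_le_tsum _ fun k _ => hnn _ (by omega)
  rw [show 2 * n + 2 * n = 4 * n by ring] at hfar
  push_cast at hfar
  calc ∑' k, ξ (n + 1 + k) = ∑ k ∈ range n, ξ (n + 1 + k) + T := by
        rw [tsum_add_eq_sum_add_tsum hsum (n + 1) n, show n + 1 + n = 2 * n + 1 by ring]
    _ ≤ n * ξ n + T := by gcongr; exact sum_range_le_mul_of_antitoneOn hanti hn n
    _ ≤ n * (C * ξ (4 * n)) + T := by gcongr; exact hC n hn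
    _ = C / 2 * (2 * n * ξ (4 * n)) + T := by ring
    _ ≤ C / 2 * T + T := by gcongr
    _ = (1 + C / 2) * T := by ring

end AntitoneTail

theorem stmt_4 (ξ : ℕ → ℝ)
    (hmono : ∀ n, 1 ≤ n → ξ (n + 1) ≤ ξ n)
    (hnn : ∀ n, 1 ≤ n → 0 ≤ ξ n)
    (hsum : Summable ξ)
    (h : ∃ M : ℝ, ∀ n, 1 ≤ n → ξ n ≤ M * ξ (2 * n)) :
    ∃ M : ℝ, ∀ n, 1 ≤ n → ainf ξ n ≤ M * ainf ξ (2 * n) := by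
  obtain ⟨M, hM⟩ := h
  set K := max M 0
  have hK : ∀ n, 1 ≤ n → ξ n ≤ K * ξ (2 * n) := fun n hn =>
    (hM n hn).trans (mul_le_mul_of_nonneg_right (le_max_left _ _) (hnn _ (by omega)))
  refine ⟨2 + K ^ 2, fun n hn => ?_⟩
  have htail := tsum_tail_le_mul_tsum_tail_two_mul (antitoneOn_nat_Ici_of_succ_le hmono) hnn hsum
    (sq_nonneg K) (fun m hm => le_sq_mul_four_mul (le_max_right M 0) hK hm) hn
  rw [← natCast_mul_ainf ξ (by omega : n ≠ 0), ← natCast_mul_ainf ξ (by omega : 2 * n ≠ 0)]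
    at htail
  push_cast at htail
  exact le_of_mul_le_mul_left (htail.trans_eq (by ring)) (by exact_mod_cast hn)
end

section
/- Let ξ be a nonincreasing summable sequence of positive reals with ξ_{a∞} ≤ M ξ for some M > 0. Then there exist constants C > 0 and p > 1 such that ξ_n ≤ C (m/n)^p ξ_m for all integers n ≥ m ≥ 1. (One may take p = 1 + 1/M.) -/
open scoped BigOperators
open Filter

/-!
Write `R n = ∑_{j > n} ξ_j`. The hypothesis reads `R n ≤ M n ξ_n`, so
`R (n-1) = ξ_n + R n ≥ (1 + 1/(M n)) R n`; by Bernoulli's inequality this makes `n ^ θ R n`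
nonincreasing for `θ = 1/(2M+1)`. For `n ≥ 2m`, monotonicity of `ξ` gives
`(n/2) ξ_n ≤ R (n/2) ≤ (2m/n)^θ R m ≤ (2m/n)^θ M m ξ_m`, which is the claim with `p = 1 + θ`;
for `m ≤ n < 2m` the claim is just `ξ_n ≤ ξ_m`.
-/

noncomputable def tailSum (f : ℕ → ℝ) (n : ℕ) : ℝ := ∑' k : ℕ, f (n + 1 + k)

variable {f : ℕ → ℝ}

lemma ainf_eq_tailSum_div (n : ℕ) : ainf f n = tailSum f n / n := by
  rw [ainf, tailSum, one_div_mul_eq_div]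

lemma tailSum_nonneg (hf : ∀ n, 1 ≤ n → 0 ≤ f n) (n : ℕ) : 0 ≤ tailSum f n :=
  tsum_nonneg fun _ => hf _ (by omega)

lemma tailSum_eq_add_tailSum_succ (hf : Summable f) (n : ℕ) :
    tailSum f n = f (n + 1) + tailSum f (n + 1) := by
  have hsum : Summable fun k => f (n + 1 + k) := hf.comp_injective fun a b h => by omega
  rw [tailSum, hsum.tsum_eq_zero_add, tailSum]
  congr 1
  exact tsum_congr fun k => congrArg f (by omega)

lemma sum_Ioc_add_tailSum (hf : Summable f) {k n : ℕ} (hkn : k ≤ n) :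
    ∑ j ∈ Finset.Ioc k n, f j + tailSum f n = tailSum f k := by
  induction n, hkn using Nat.le_induction with
  | base => simp
  | succ n hkn ih =>
    rw [Finset.sum_Ioc_succ_top (by omega), ← ih, tailSum_eq_add_tailSum_succ hf n]
    ring

lemma sub_mul_le_tailSum (hf : Summable f) (hnonneg : ∀ n, 1 ≤ n → 0 ≤ f n)
    (hanti : AntitoneOn f (Set.Ici 1)) {k n : ℕ} (hkn : k ≤ n) :
    ((n : ℝ) - k) * f n ≤ tailSum f k := by
  have hlower : ((n : ℝ) - k) * f n ≤ ∑ j ∈ Finset.Ioc k n, f j := by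
    calc ((n : ℝ) - k) * f n = ∑ _j ∈ Finset.Ioc k n, f n := by
          rw [Finset.sum_const, Nat.card_Ioc, nsmul_eq_mul, Nat.cast_sub hkn]
      _ ≤ ∑ j ∈ Finset.Ioc k n, f j := Finset.sum_le_sum fun j hj => by
          rw [Finset.mem_Ioc] at hj
          exact hanti (Set.mem_Ici.2 (by omega)) (Set.mem_Ici.2 (by omega)) hj.2
  linarith [sum_Ioc_add_tailSum hf hkn, tailSum_nonneg hnonneg n]

lemma tailSum_succ_mul_le (hf : Summable f) {M : ℝ} (hM : 0 < M) {n : ℕ}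
    (h : tailSum f (n + 1) ≤ M * (n + 1) * f (n + 1)) :
    tailSum f (n + 1) * (1 + 1 / (M * (n + 1))) ≤ tailSum f n := by
  have hMn : 0 < M * ((n : ℝ) + 1) := by positivity
  have hdiv : tailSum f (n + 1) / (M * (n + 1)) ≤ f (n + 1) := by
    rw [div_le_iff₀ hMn]
    linarith
  rw [tailSum_eq_add_tailSum_succ hf n, mul_one_add, mul_one_div]
  linarith

lemma add_one_rpow_le_rpow_mul {M θ : ℝ} (hM : 0 < M) (hθ0 : 0 ≤ θ) (hθ1 : θ ≤ 1)
    (hθM : 2 * θ * M ≤ 1) {x : ℝ} (hx : 1 ≤ x) :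
    (x + 1) ^ θ ≤ x ^ θ * (1 + 1 / (M * (x + 1))) := by
  have hx0 : 0 < x := by linarith
  have hsplit : (x + 1) ^ θ = x ^ θ * (1 + 1 / x) ^ θ := by
    rw [← Real.mul_rpow hx0.le (by positivity), mul_one_add, mul_one_div_cancel hx0.ne']
  have hbernoulli : (1 + 1 / x) ^ θ ≤ 1 + θ * (1 / x) :=
    rpow_one_add_le_one_add_mul_self (by linarith [one_div_pos.2 hx0]) hθ0 hθ1
  have hsmall : θ * (1 / x) ≤ 1 / (M * (x + 1)) := by
    rw [mul_one_div, div_le_div_iff₀ hx0 (by positivity)]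
    nlinarith
  rw [hsplit]
  gcongr
  linarith

lemma mul_rpow_le_of_succ_mul_le {R : ℕ → ℝ} {M θ : ℝ} (hM : 0 < M) (hθ0 : 0 ≤ θ)
    (hθ1 : θ ≤ 1) (hθM : 2 * θ * M ≤ 1) (hR : ∀ n, 0 ≤ R n)
    (hstep : ∀ n : ℕ, 1 ≤ n → R (n + 1) * (1 + 1 / (M * (n + 1))) ≤ R n)
    {m n : ℕ} (hm : 1 ≤ m) (hmn : m ≤ n) :
    R n * (n : ℝ) ^ θ ≤ R m * (m : ℝ) ^ θ := by
  induction n, hmn using Nat.le_induction with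
  | base => rfl
  | succ n hmn ih =>
    have hn : (1 : ℝ) ≤ n := by exact_mod_cast hm.trans hmn
    calc R (n + 1) * ((n + 1 : ℕ) : ℝ) ^ θ
        ≤ R (n + 1) * ((n : ℝ) ^ θ * (1 + 1 / (M * (n + 1)))) := by
          push_cast
          exact mul_le_mul_of_nonneg_left (add_one_rpow_le_rpow_mul hM hθ0 hθ1 hθM hn) (hR _)
      _ = R (n + 1) * (1 + 1 / (M * (n + 1))) * (n : ℝ) ^ θ := by ring
      _ ≤ R n * (n : ℝ) ^ θ := by gcongr; exact hstep n (hm.trans hmn)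
      _ ≤ R m * (m : ℝ) ^ θ := ih

section

variable {ξ : ℕ → ℝ} (hanti : AntitoneOn ξ (Set.Ici 1))
include hanti

lemma mul_rpow_le_of_lt_two_mul {p : ℝ} (hp : 0 ≤ p) {m n : ℕ} (hm : 1 ≤ m) (hξm : 0 ≤ ξ m)
    (hmn : m ≤ n) (hnm : n < 2 * m) :
    ξ n * (n : ℝ) ^ p ≤ 2 ^ p * ξ m * (m : ℝ) ^ p := by
  have hξ : ξ n ≤ ξ m := hanti (Set.mem_Ici.2 hm) (Set.mem_Ici.2 (hm.trans hmn)) hmn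
  have hn : (n : ℝ) ≤ 2 * m := by exact_mod_cast hnm.le
  calc ξ n * (n : ℝ) ^ p ≤ ξ m * (2 * m : ℝ) ^ p := by gcongr
    _ = 2 ^ p * ξ m * (m : ℝ) ^ p := by
        rw [Real.mul_rpow (by norm_num) (by positivity)]
        ring

lemma mul_rpow_le_of_two_mul_le (hsum : Summable ξ) (hnonneg : ∀ n, 1 ≤ n → 0 ≤ ξ n)
    {M θ : ℝ} (hM : 0 < M) (hθ0 : 0 ≤ θ) (hθ1 : θ ≤ 1) (hθM : 2 * θ * M ≤ 1)
    (htail : ∀ n, 1 ≤ n → tailSum ξ n ≤ M * n * ξ n)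
    {m n : ℕ} (hm : 1 ≤ m) (hmn : 2 * m ≤ n) :
    ξ n * (n : ℝ) ^ (1 + θ) ≤ 2 * 3 ^ θ * M * ξ m * (m : ℝ) ^ (1 + θ) := by
  set k := n / 2 with hk
  have hmk : m ≤ k := by omega
  have hkn : k ≤ n := Nat.div_le_self n 2
  have hn_sub : (n : ℝ) ≤ 2 * ((n : ℝ) - k) := by
    have : ((2 * k : ℕ) : ℝ) ≤ n := by exact_mod_cast Nat.mul_div_le n 2
    push_cast at this
    linarith
  have hn_k : (n : ℝ) ≤ 3 * k := by exact_mod_cast (by omega : n ≤ 3 * k)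
  have hdecay : tailSum ξ k * (k : ℝ) ^ θ ≤ tailSum ξ m * (m : ℝ) ^ θ :=
    mul_rpow_le_of_succ_mul_le hM hθ0 hθ1 hθM (tailSum_nonneg hnonneg)
      (fun n hn => tailSum_succ_mul_le hsum hM (by exact_mod_cast htail (n + 1) (by omega)))
      hm hmk
  have hn0 : (0 : ℝ) < n := by exact_mod_cast (by omega : 0 < n)
  have hkn' : (k : ℝ) ≤ n := by exact_mod_cast hkn
  have hξn := hnonneg n (by omega)
  calc ξ n * (n : ℝ) ^ (1 + θ) = (n : ℝ) * (n : ℝ) ^ θ * ξ n := by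
        rw [Real.rpow_add (by positivity), Real.rpow_one]
        ring
    _ ≤ (2 * ((n : ℝ) - k)) * (3 * k : ℝ) ^ θ * ξ n := by gcongr
    _ = 2 * 3 ^ θ * (((n : ℝ) - k) * ξ n) * (k : ℝ) ^ θ := by
        rw [Real.mul_rpow (by norm_num) (by positivity)]
        ring
    _ ≤ 2 * 3 ^ θ * tailSum ξ k * (k : ℝ) ^ θ := by
        gcongr
        exact sub_mul_le_tailSum hsum hnonneg hanti hkn
    _ ≤ 2 * 3 ^ θ * tailSum ξ m * (m : ℝ) ^ θ := by
        rw [mul_assoc _ (tailSum ξ k), mul_assoc _ (tailSum ξ m)]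
        gcongr
    _ ≤ 2 * 3 ^ θ * (M * m * ξ m) * (m : ℝ) ^ θ := by
        gcongr
        exact htail m hm
    _ = 2 * 3 ^ θ * M * ξ m * (m : ℝ) ^ (1 + θ) := by
        rw [Real.rpow_add (by positivity), Real.rpow_one]
        ring

end

theorem stmt_8 (ξ : ℕ → ℝ)
    (hmono : ∀ n, 1 ≤ n → ξ (n + 1) ≤ ξ n)
    (hpos : ∀ n, 1 ≤ n → 0 < ξ n)
    (hsum : Summable ξ)
    (M : ℝ) (hM : 0 < M) (h : ∀ n, 1 ≤ n → ainf ξ n ≤ M * ξ n) :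
    ∃ C : ℝ, 0 < C ∧ ∃ p : ℝ, 1 < p ∧
      ∀ m n : ℕ, 1 ≤ m → m ≤ n → ξ n ≤ C * ((m : ℝ) / n) ^ p * ξ m := by
  have hanti : AntitoneOn ξ (Set.Ici 1) := antitoneOn_nat_Ici_of_succ_le hmono
  have htail : ∀ n, 1 ≤ n → tailSum ξ n ≤ M * n * ξ n := fun n hn => by
    have := h n hn
    rw [ainf_eq_tailSum_div, div_le_iff₀ (by positivity)] at this
    linarith
  set θ : ℝ := 1 / (2 * M + 1)
  have hθ0 : 0 < θ := by positivity
  have hθ1 : θ ≤ 1 := by rw [div_le_one (by positivity)]; linarith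
  have hθM : 2 * θ * M ≤ 1 := by
    rw [mul_comm 2, mul_assoc, one_div_mul_eq_div, div_le_one (by positivity)]
    linarith
  set C : ℝ := 2 ^ (1 + θ) + 2 * 3 ^ θ * M
  refine ⟨C, by positivity, 1 + θ, by linarith, fun m n hm hmn => ?_⟩
  have hξm := hpos m hm
  have hkey : ξ n * (n : ℝ) ^ (1 + θ) ≤ C * ξ m * (m : ℝ) ^ (1 + θ) := by
    rcases lt_or_ge n (2 * m) with hnear | hfar
    · refine (mul_rpow_le_of_lt_two_mul hanti (by positivity) hm hξm.le hmn hnear).trans ?_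
      gcongr
      exact le_add_of_nonneg_right (by positivity)
    · refine (mul_rpow_le_of_two_mul_le hanti hsum (fun n hn => (hpos n hn).le) hM hθ0.le hθ1
        hθM htail hm hfar).trans ?_
      gcongr
      exact le_add_of_nonneg_left (by positivity)
  have hn : (0 : ℝ) < n := by exact_mod_cast hm.trans hmn
  calc ξ n ≤ C * ξ m * (m : ℝ) ^ (1 + θ) / (n : ℝ) ^ (1 + θ) := by
        rwa [le_div_iff₀ (by positivity)]
    _ = C * ((m : ℝ) / n) ^ (1 + θ) * ξ m := by
        rw [Real.div_rpow (by positivity) hn.le]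
        ring
end

section
/- Let ξ be a nonincreasing summable sequence of nonnegative reals. If there exist C > 0 and p > 1 such that ξ_n ≤ C (m/n)^p ξ_m for all n ≥ m ≥ 1, then (ξ_{a∞})_n ≤ (C/(p-1)) ξ_n for all n, i.e., ξ_{a∞} = O(ξ). -/
open scoped BigOperators
open Filter

/-!
The tail $\sum_{j>n} \xi_j$ is bounded termwise by $C \xi_n n^p j^{-p}$ (the hypothesis with $m = n$),
and $\sum_{j>n} j^{-p} \le \int_n^\infty t^{-p}\,dt = n^{1-p}/(p-1)$ because $t \mapsto t^{-p}$ is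
antitone. Hence the tail is at most $C \xi_n n/(p-1)$, and dividing by $n$ gives the claim.
-/

lemma integral_rpow_neg_le {x : ℝ} (hx : 0 < x) {p : ℝ} (hp : 1 < p) {y : ℝ} (hxy : x ≤ y) :
    ∫ t in x..y, t ^ (-p) ≤ x ^ (1 - p) / (p - 1) := by
  have hy : 0 < y := hx.trans_le hxy
  have h0 : (0 : ℝ) ∉ Set.uIcc x y := by
    rw [Set.uIcc_of_le hxy]; exact fun h ↦ hx.not_ge h.1
  rw [integral_rpow (Or.inr ⟨by linarith, h0⟩),
    show (y ^ (-p + 1) - x ^ (-p + 1)) / (-p + 1) = (x ^ (1 - p) - y ^ (1 - p)) / (p - 1) by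
      rw [← neg_div_neg_eq, neg_sub, neg_add, neg_neg, ← sub_eq_add_neg, neg_add_eq_sub]]
  gcongr
  exact sub_le_self _ (Real.rpow_nonneg hy.le _)

lemma sum_range_rpow_neg_le {x : ℝ} (hx : 0 < x) {p : ℝ} (hp : 1 < p) (N : ℕ) :
    ∑ i ∈ Finset.range N, (x + 1 + i) ^ (-p) ≤ x ^ (1 - p) / (p - 1) := by
  have hanti : AntitoneOn (fun t : ℝ ↦ t ^ (-p)) (Set.Icc x (x + N)) := fun s hs t _ hst ↦
    Real.rpow_le_rpow_of_nonpos (hx.trans_le hs.1) hst (by linarith)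
  calc ∑ i ∈ Finset.range N, (x + 1 + i) ^ (-p)
      = ∑ i ∈ Finset.range N, (x + (i + 1 : ℕ)) ^ (-p) := by push_cast; ring_nf
    _ ≤ ∫ t in x..x + N, t ^ (-p) := hanti.sum_le_integral
    _ ≤ x ^ (1 - p) / (p - 1) := integral_rpow_neg_le hx hp (by simp)

lemma tsum_le_of_le_rpow_neg {f : ℕ → ℝ} (hf₀ : ∀ k, 0 ≤ f k) {A x p : ℝ} (hA : 0 ≤ A)
    (hx : 0 < x) (hp : 1 < p) (hf : ∀ k, f k ≤ A * (x + 1 + k) ^ (-p)) :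
    ∑' k, f k ≤ A * (x ^ (1 - p) / (p - 1)) := by
  refine Real.tsum_le_of_sum_range_le hf₀ fun N ↦ ?_
  calc ∑ k ∈ Finset.range N, f k
      ≤ ∑ k ∈ Finset.range N, A * (x + 1 + k) ^ (-p) := Finset.sum_le_sum fun k _ ↦ hf k
    _ = A * ∑ k ∈ Finset.range N, (x + 1 + k) ^ (-p) := (Finset.mul_sum ..).symm
    _ ≤ A * (x ^ (1 - p) / (p - 1)) := by gcongr; exact sum_range_rpow_neg_le hx hp N

theorem stmt_9_general (ξ : ℕ → ℝ)
    (hnn : ∀ n, 1 ≤ n → 0 ≤ ξ n)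
    (C p : ℝ) (hC : 0 < C) (hp : 1 < p)
    (h : ∀ m n : ℕ, 1 ≤ m → m ≤ n → ξ n ≤ C * ((m : ℝ) / n) ^ p * ξ m) :
    ∀ n, 1 ≤ n → ainf ξ n ≤ (C / (p - 1)) * ξ n := by
  intro n hn
  have hn₀ : (0 : ℝ) < n := by exact_mod_cast hn
  have hξn := hnn n hn
  have hdecay (k : ℕ) : ξ (n + 1 + k) ≤ C * ξ n * n ^ p * ((n : ℝ) + 1 + k) ^ (-p) := by
    have hk : (0 : ℝ) < n + 1 + k := by positivity
    calc ξ (n + 1 + k) ≤ C * ((n : ℝ) / (n + 1 + k : ℕ)) ^ p * ξ n := h n _ hn (by omega)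
      _ = C * ξ n * n ^ p * ((n : ℝ) + 1 + k) ^ (-p) := by
        push_cast
        rw [Real.div_rpow hn₀.le hk.le, Real.rpow_neg hk.le]
        ring
  have htail : ∑' k, ξ (n + 1 + k) ≤ C * ξ n * n ^ p * ((n : ℝ) ^ (1 - p) / (p - 1)) :=
    tsum_le_of_le_rpow_neg (fun k ↦ hnn _ (by omega)) (by positivity) hn₀ hp hdecay
  have hpow : (n : ℝ) ^ p * (n : ℝ) ^ (1 - p) = n := by
    rw [← Real.rpow_add hn₀, add_sub_cancel, Real.rpow_one]
  calc ainf ξ n ≤ 1 / n * (C * ξ n * n ^ p * ((n : ℝ) ^ (1 - p) / (p - 1))) := by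
        unfold ainf; gcongr
    _ = C / (p - 1) * ξ n := by
        rw [mul_div_assoc', mul_assoc (C * ξ n), hpow]
        field_simp

theorem stmt_9 (ξ : ℕ → ℝ)
    (hmono : ∀ n, 1 ≤ n → ξ (n + 1) ≤ ξ n)
    (hnn : ∀ n, 1 ≤ n → 0 ≤ ξ n)
    (hsum : Summable ξ)
    (C p : ℝ) (hC : 0 < C) (hp : 1 < p)
    (h : ∀ m n : ℕ, 1 ≤ m → m ≤ n → ξ n ≤ C * ((m : ℝ) / n) ^ p * ξ m) :
    ∀ n, 1 ≤ n → ainf ξ n ≤ (C / (p - 1)) * ξ n :=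
  stmt_9_general ξ hnn C p hC hp h
end

section
/- Let ξ be a nonincreasing summable sequence of nonnegative reals. If ξ_{a∞} ≤ M ξ for some M > 0, then the second arithmetic mean at infinity satisfies (ξ_{a∞})_{a∞} ≤ M ξ_{a∞}; that is, the condition 'η_{a∞} = O(η)' is inherited by η = ξ_{a∞}. -/
open scoped BigOperators
open Filter

section ainf

variable {f g : ℕ → ℝ} {n : ℕ}

lemma ainf_nonneg (hf : ∀ k, n < k → 0 ≤ f k) : 0 ≤ ainf f n :=
  mul_nonneg (by positivity) (tsum_nonneg fun _ => hf _ (by omega))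

lemma ainf_const_mul (c : ℝ) (f : ℕ → ℝ) (n : ℕ) :
    ainf (fun k => c * f k) n = c * ainf f n := by
  unfold ainf
  rw [tsum_mul_left]
  ring

lemma ainf_le_ainf (hf : ∀ k, n < k → 0 ≤ f k) (hfg : ∀ k, n < k → f k ≤ g k)
    (hg : Summable g) : ainf f n ≤ ainf g n := by
  have hg' : Summable fun k => g (n + 1 + k) := by
    simpa only [add_comm] using (summable_nat_add_iff (n + 1)).mpr hg
  have hf' : Summable fun k => f (n + 1 + k) :=
    hg'.of_nonneg_of_le (fun _ => hf _ (by omega)) (fun _ => hfg _ (by omega))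
  exact mul_le_mul_of_nonneg_left
    (hf'.tsum_le_tsum (fun _ => hfg _ (by omega)) hg') (by positivity)

end ainf

theorem stmt_10_general (ξ : ℕ → ℝ)
    (hnn : ∀ n, 1 ≤ n → 0 ≤ ξ n)
    (hsum : Summable ξ)
    (M : ℝ) (h : ∀ n, 1 ≤ n → ainf ξ n ≤ M * ξ n) :
    ∀ n, 1 ≤ n → ainf (ainf ξ) n ≤ M * ainf ξ n := by
  intro n hn
  have hainf_nonneg : ∀ k, n < k → 0 ≤ ainf ξ k :=
    fun _ _ => ainf_nonneg fun _ _ => hnn _ (by omega)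
  calc ainf (ainf ξ) n
      ≤ ainf (fun k => M * ξ k) n :=
        ainf_le_ainf hainf_nonneg (fun _ _ => h _ (by omega)) (hsum.mul_left M)
    _ = M * ainf ξ n := ainf_const_mul M ξ n

theorem stmt_10 (ξ : ℕ → ℝ)
    (hmono : ∀ n, 1 ≤ n → ξ (n + 1) ≤ ξ n)
    (hnn : ∀ n, 1 ≤ n → 0 ≤ ξ n)
    (hsum : Summable ξ)
    (M : ℝ) (hM : 0 < M) (h : ∀ n, 1 ≤ n → ainf ξ n ≤ M * ξ n) :
    ∀ n, 1 ≤ n → ainf (ainf ξ) n ≤ M * ainf ξ n :=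
  stmt_10_general ξ hnn hsum M h
end

section
/- Let ξ be a nonincreasing summable sequence of positive reals such that for some integer k > 1, inf_n (ξ_{a∞})_n / (ξ_{a∞})_{kn} > k for that k (and hence, iterating, the suprema over powers of k of inf_n (ξ_{a∞})_n/(k^m (ξ_{a∞})_{k^m n}) are unbounded). Then sup_k inf_n (ξ_{a∞})_n / (k (ξ_{a∞})_{kn}) = ∞. -/
open scoped BigOperators
open Filter

/-! A lower bound `c` on the ratios `a n / a (k n)` telescopes to the bound `c ^ m` on
`a n / a (k ^ m n)`. When `c > k` this beats the normalisation `k ^ m`, so the normalised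
ratios `a n / (K a (K n))` are unbounded along `K = k ^ m`. -/

section RatioBound

variable {a : ℕ → ℝ} {k : ℕ} {c : ℝ}

theorem ne_zero_of_le_div (hc : 0 < c) (h : ∀ n, 1 ≤ n → c ≤ a n / a (k * n))
    {n : ℕ} (hn : 1 ≤ n) : a n ≠ 0 := by
  intro h0
  have := h n hn
  rw [h0, zero_div] at this
  linarith

theorem pow_le_div_of_forall_le_div (hk : 0 < k) (hc : 0 < c)
    (h : ∀ n, 1 ≤ n → c ≤ a n / a (k * n)) (m : ℕ) {n : ℕ} (hn : 1 ≤ n) :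
    c ^ m ≤ a n / a (k ^ m * n) := by
  induction m with
  | zero => simp [div_self (ne_zero_of_le_div hc h hn)]
  | succ m ih =>
    have hkmn : 1 ≤ k ^ m * n := Nat.one_le_iff_ne_zero.mpr (by positivity)
    calc c ^ (m + 1) = c ^ m * c := pow_succ c m
      _ ≤ a n / a (k ^ m * n) * (a (k ^ m * n) / a (k * (k ^ m * n))) :=
        mul_le_mul ih (h _ hkmn) hc.le ((pow_pos hc m).le.trans ih)
      _ = a n / a (k ^ (m + 1) * n) := by
        rw [div_mul_div_cancel₀ (ne_zero_of_le_div hc h hkmn), pow_succ', mul_assoc]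

theorem div_pow_le_div_mul_of_forall_le_div (hk : 0 < k) (hc : 0 < c)
    (h : ∀ n, 1 ≤ n → c ≤ a n / a (k * n)) (m : ℕ) {n : ℕ} (hn : 1 ≤ n) :
    (c / k) ^ m ≤ a n / (((k ^ m : ℕ) : ℝ) * a (k ^ m * n)) := by
  have hkm : (0 : ℝ) < (k : ℝ) ^ m := by positivity
  rw [div_pow, Nat.cast_pow, div_mul_eq_div_div_swap]
  exact div_le_div_of_nonneg_right (pow_le_div_of_forall_le_div hk hc h m hn) hkm.le

end RatioBound

theorem stmt_14_general (ξ : ℕ → ℝ)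
    (k : ℕ) (hk : 1 < k) (c : ℝ) (hc : (k : ℝ) < c)
    (h : ∀ n, 1 ≤ n → c ≤ ainf ξ n / ainf ξ (k * n)) :
    ∀ B : ℝ, ∃ K : ℕ, 1 ≤ K ∧ ∀ n, 1 ≤ n →
      B ≤ ainf ξ n / ((K : ℝ) * ainf ξ (K * n)) := by
  intro B
  have hk0 : 0 < k := by omega
  have hkR : (0 : ℝ) < k := by exact_mod_cast hk0
  obtain ⟨m, hm⟩ := pow_unbounded_of_one_lt B ((one_lt_div hkR).mpr hc)
  refine ⟨k ^ m, Nat.one_le_iff_ne_zero.mpr (by positivity), fun n hn => ?_⟩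
  exact hm.le.trans
    (div_pow_le_div_mul_of_forall_le_div hk0 (hkR.trans hc) h m hn)

theorem stmt_14 (ξ : ℕ → ℝ)
    (hmono : ∀ n, 1 ≤ n → ξ (n + 1) ≤ ξ n)
    (hpos : ∀ n, 1 ≤ n → 0 < ξ n)
    (hsum : Summable ξ)
    (k : ℕ) (hk : 1 < k) (c : ℝ) (hc : (k : ℝ) < c)
    (h : ∀ n, 1 ≤ n → c ≤ ainf ξ n / ainf ξ (k * n)) :
    ∀ B : ℝ, ∃ K : ℕ, 1 ≤ K ∧ ∀ n, 1 ≤ n →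
      B ≤ ainf ξ n / ((K : ℝ) * ainf ξ (K * n)) :=
  stmt_14_general ξ k hk c hc h
end

section
/- Let ξ be a nonincreasing sequence of positive reals tending to 0 with ξ_a ≤ M ξ for some M > 1, where (ξ_a)_n = (1/n)∑_{j≤n} ξ_j. Then ξ_n ≥ (1/(M 2^{1/M})) (m/n)^{1 - 1/M} ξ_m for all n ≥ m ≥ 1. -/
open scoped BigOperators
open Filter

/-! With `S n = ∑_{j ≤ n} ξ j`, regularity reads `S n ≤ M n ξ n`, so each new term `ξ (k+1)` is at
least a fraction `1 / (M (k+1))` of `S (k+1)`. Hence `S (k+1) ≥ (1 + 1/(M (k+1))) S k`, and by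
Bernoulli's inequality the partial sums grow at least like `n ^ (1/M)`. Squeezing `S n` between
`m ξ m ((n+1)/(m+1)) ^ (1/M)` and `M n ξ n` gives the bound; the factor `2 ^ (1/M)` comes from
`n / (2m) ≤ (n+1)/(m+1)`. -/

lemma add_one_div_rpow_le {a p : ℝ} (ha : 0 < a) (hp0 : 0 ≤ p) (hp1 : p ≤ 1) :
    ((a + 1) / a) ^ p ≤ 1 + p / a := by
  have hsplit : (a + 1) / a = 1 + 1 / a := by field_simp
  rw [hsplit, div_eq_mul_one_div p a]
  exact rpow_one_add_le_one_add_mul_self (by linarith [one_div_pos.2 ha]) hp0 hp1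

lemma mul_rpow_le_of_mul_one_add_le {S : ℕ → ℝ} {p : ℝ} {m : ℕ} (hp0 : 0 ≤ p) (hp1 : p ≤ 1)
    (hSm : 0 ≤ S m) (hS : ∀ k, m ≤ k → S k * (1 + p / (k + 1)) ≤ S (k + 1)) :
    ∀ n, m ≤ n → S m * (((n : ℝ) + 1) / (m + 1)) ^ p ≤ S n := by
  intro n hmn
  induction n, hmn using Nat.le_induction with
  | base => rw [div_self (by positivity), Real.one_rpow, mul_one]
  | succ k hk ih =>
    have hfactor :
        ((↑(k + 1) : ℝ) + 1) / (m + 1) = ((k + 1) / (m + 1)) * ((k + 1 + 1) / (k + 1)) := by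
      push_cast
      field_simp
    calc S m * ((↑(k + 1) + 1) / (m + 1)) ^ p
        = S m * ((k + 1) / (m + 1)) ^ p * (((k : ℝ) + 1 + 1) / (k + 1)) ^ p := by
          rw [hfactor, Real.mul_rpow (by positivity) (by positivity), mul_assoc]
      _ ≤ S k * (1 + p / (k + 1)) :=
          mul_le_mul ih (add_one_div_rpow_le (by positivity) hp0 hp1) (by positivity)
            ((by positivity : 0 ≤ S m * ((k + 1 : ℝ) / (m + 1)) ^ p).trans ih)
      _ ≤ S (k + 1) := hS k hk

section PartialSums

variable {ξ : ℕ → ℝ}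

lemma sum_Icc_mul_one_add_le_of_ces_le {M : ℝ} (hM : 0 < M) (hξ : ∀ n, 1 ≤ n → 0 ≤ ξ n) {k : ℕ}
    (h : ces ξ (k + 1) ≤ M * ξ (k + 1)) :
    (∑ j ∈ Finset.Icc 1 k, ξ j) * (1 + 1 / M / (k + 1)) ≤ ∑ j ∈ Finset.Icc 1 (k + 1), ξ j := by
  set x : ℝ := 1 / M / (k + 1)
  have hx : 0 ≤ x := by positivity
  have hsucc : ∑ j ∈ Finset.Icc 1 (k + 1), ξ j = ∑ j ∈ Finset.Icc 1 k, ξ j + ξ (k + 1) :=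
    Finset.sum_Icc_succ_top (by omega) ξ
  have hS : 0 ≤ ∑ j ∈ Finset.Icc 1 (k + 1), ξ j :=
    Finset.sum_nonneg fun j hj => hξ j (Finset.mem_Icc.1 hj).1
  have hnew : x * ∑ j ∈ Finset.Icc 1 (k + 1), ξ j ≤ ξ (k + 1) := by
    have hces : x * ∑ j ∈ Finset.Icc 1 (k + 1), ξ j = ces ξ (k + 1) / M := by
      simp only [x, ces]
      push_cast
      field_simp
    rw [hces, div_le_iff₀ hM, mul_comm]
    exact h
  -- `S k ≤ (1 - x) S (k+1)`, and `(1 - x) (1 + x) ≤ 1`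
  nlinarith [mul_nonneg (mul_nonneg hx hx) hS]

lemma natCast_mul_le_sum_Icc_of_antitoneOn (hξ : AntitoneOn ξ (Set.Ici 1)) (m : ℕ) :
    m * ξ m ≤ ∑ j ∈ Finset.Icc 1 m, ξ j := by
  have hle : ∑ _j ∈ Finset.Icc 1 m, ξ m ≤ ∑ j ∈ Finset.Icc 1 m, ξ j :=
    Finset.sum_le_sum fun j hj => by
      obtain ⟨h1j, hjm⟩ := Finset.mem_Icc.1 hj
      exact hξ (Set.mem_Ici.2 h1j) (Set.mem_Ici.2 (h1j.trans hjm)) hjm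
  simpa [nsmul_eq_mul] using hle

lemma sum_Icc_le_of_ces_le {M : ℝ} {n : ℕ} (hn : 1 ≤ n) (h : ces ξ n ≤ M * ξ n) :
    ∑ j ∈ Finset.Icc 1 n, ξ j ≤ M * n * ξ n := by
  have hn0 : (0 : ℝ) < n := by exact_mod_cast hn
  rw [ces, one_div, inv_mul_le_iff₀ hn0] at h
  linarith

end PartialSums

lemma div_two_mul_le_add_one_div_add_one {m n : ℝ} (hm : 1 ≤ m) (hn : 0 ≤ n) :
    n / (2 * m) ≤ (n + 1) / (m + 1) := by
  rw [div_le_div_iff₀ (by positivity) (by positivity)]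
  nlinarith

lemma div_rpow_one_sub_div_two_rpow {a b : ℝ} (ha : 0 < a) (hb : 0 < b) (p : ℝ) :
    (a / b) ^ (1 - p) / 2 ^ p = a / b * (b / (2 * a)) ^ p := by
  rw [Real.rpow_sub (by positivity), Real.rpow_one, mul_comm 2 a, ← div_div,
    Real.div_rpow (by positivity) zero_le_two, ← inv_div a b, Real.inv_rpow (by positivity)]
  field_simp

theorem stmt_15_general (ξ : ℕ → ℝ)
    (hmono : ∀ n, 1 ≤ n → ξ (n + 1) ≤ ξ n)
    (hpos : ∀ n, 1 ≤ n → 0 < ξ n)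
    (M : ℝ) (hM : 1 < M) (h : ∀ n, 1 ≤ n → ces ξ n ≤ M * ξ n) :
    ∀ m n : ℕ, 1 ≤ m → m ≤ n →
      (1 / (M * (2 : ℝ) ^ (1 / M))) * ((m : ℝ) / n) ^ (1 - 1 / M) * ξ m ≤ ξ n := by
  intro m n hm hmn
  have hM0 : 0 < M := one_pos.trans hM
  have hp1 : 1 / M ≤ 1 := (div_le_one hM0).2 hM.le
  have hξ : ∀ n, 1 ≤ n → 0 ≤ ξ n := fun n hn => (hpos n hn).le
  have hm0 : (0 : ℝ) < m := by exact_mod_cast hm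
  have hn0 : (0 : ℝ) < n := by exact_mod_cast hm.trans hmn
  have hSm : 0 ≤ ∑ j ∈ Finset.Icc 1 m, ξ j :=
    Finset.sum_nonneg fun j hj => hξ j (Finset.mem_Icc.1 hj).1
  have hsandwich : m * ξ m * ((n : ℝ) / (2 * m)) ^ (1 / M) ≤ M * n * ξ n :=
    calc m * ξ m * ((n : ℝ) / (2 * m)) ^ (1 / M)
        ≤ (∑ j ∈ Finset.Icc 1 m, ξ j) * (((n : ℝ) + 1) / (m + 1)) ^ (1 / M) :=
          mul_le_mul
            (natCast_mul_le_sum_Icc_of_antitoneOn (antitoneOn_nat_Ici_of_succ_le hmono) m)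
            (Real.rpow_le_rpow (by positivity)
              (div_two_mul_le_add_one_div_add_one (by exact_mod_cast hm) hn0.le) (by positivity))
            (by positivity) hSm
      _ ≤ ∑ j ∈ Finset.Icc 1 n, ξ j := mul_rpow_le_of_mul_one_add_le (by positivity) hp1 hSm
          (fun k _ => sum_Icc_mul_one_add_le_of_ces_le hM0 hξ (h (k + 1) (by omega))) n hmn
      _ ≤ M * n * ξ n := sum_Icc_le_of_ces_le (hm.trans hmn) (h n (hm.trans hmn))
  calc 1 / (M * 2 ^ (1 / M)) * ((m : ℝ) / n) ^ (1 - 1 / M) * ξ m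
      = m * ξ m * ((n : ℝ) / (2 * m)) ^ (1 / M) / (M * n) := by
        rw [one_div_mul_eq_div, div_mul_eq_div_div_swap, div_rpow_one_sub_div_two_rpow hm0 hn0]
        field_simp
    _ ≤ ξ n := by
        rw [div_le_iff₀ (by positivity)]
        linarith

theorem stmt_15 (ξ : ℕ → ℝ)
    (hmono : ∀ n, 1 ≤ n → ξ (n + 1) ≤ ξ n)
    (hpos : ∀ n, 1 ≤ n → 0 < ξ n)
    (hlim : Tendsto ξ atTop (nhds 0))
    (M : ℝ) (hM : 1 < M) (h : ∀ n, 1 ≤ n → ces ξ n ≤ M * ξ n) :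
    ∀ m n : ℕ, 1 ≤ m → m ≤ n →
      (1 / (M * (2 : ℝ) ^ (1 / M))) * ((m : ℝ) / n) ^ (1 - 1 / M) * ξ m ≤ ξ n :=
  stmt_15_general ξ hmono hpos M hM h
end

section
/- Let ξ be a nonincreasing sequence of nonnegative reals. If there exist C > 0 and 0 < p < 1 with ξ_n ≥ C (m/n)^p ξ_m for all n ≥ m ≥ 1, then (ξ_a)_n ≤ (1/((1-p)C)) ξ_n for all n, i.e., ξ is regular. -/
open scoped BigOperators
open Filter

/-!
The growth condition with `m = j ≤ n` gives `ξ j ≤ ξ n / C * n ^ p * j ^ (-p)`, so the Cesàro sum is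
at most `ξ n / C * n ^ p * ∑_{j ≤ n} j ^ (-p)`. By concavity of `x ↦ x ^ (1 - p)` each term
`(1 - p) j ^ (-p)` is at most `j ^ (1 - p) - (j - 1) ^ (1 - p)`, and telescoping yields
`∑_{j ≤ n} j ^ (-p) ≤ n ^ (1 - p) / (1 - p)`.
-/

lemma one_sub_mul_rpow_neg_le_rpow_sub_rpow {p x : ℝ} (hp0 : 0 ≤ p) (hp1 : p ≤ 1) (hx : 1 ≤ x) :
    (1 - p) * x ^ (-p) ≤ x ^ (1 - p) - (x - 1) ^ (1 - p) := by
  have hx0 : 0 < x := by linarith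
  have hinv : 1 / x ≤ 1 := (div_le_one hx0).2 hx
  -- Bernoulli's inequality for the exponent `1 - p ∈ [0, 1]`
  have bernoulli : (1 - 1 / x) ^ (1 - p) ≤ 1 - (1 - p) * (1 / x) := by
    simpa [← sub_eq_add_neg] using
      rpow_one_add_le_one_add_mul_self (s := -(1 / x)) (by linarith) (p := 1 - p)
        (by linarith) (by linarith)
  have hsplit : x - 1 = x * (1 - 1 / x) := by field_simp
  have hpow : x ^ (1 - p) * (1 / x) = x ^ (-p) := by
    rw [one_div, ← Real.rpow_neg_one, ← Real.rpow_add hx0]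
    ring_nf
  calc (1 - p) * x ^ (-p) = x ^ (1 - p) * (1 - (1 - (1 - p) * (1 / x))) := by
        rw [← hpow]; ring
    _ ≤ x ^ (1 - p) * (1 - (1 - 1 / x) ^ (1 - p)) := by gcongr
    _ = x ^ (1 - p) - (x - 1) ^ (1 - p) := by
        rw [hsplit, Real.mul_rpow hx0.le (by linarith)]; ring

lemma one_sub_mul_sum_rpow_neg_le {p : ℝ} (hp0 : 0 ≤ p) (hp1 : p ≤ 1) (n : ℕ) :
    (1 - p) * ∑ j ∈ Finset.Icc 1 n, (j : ℝ) ^ (-p) ≤ (n : ℝ) ^ (1 - p) := by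
  induction n with
  | zero => simp [Real.rpow_nonneg]
  | succ n ih =>
    have hstep := one_sub_mul_rpow_neg_le_rpow_sub_rpow hp0 hp1 (x := n + 1) (by simp)
    rw [Finset.sum_Icc_succ_top (by omega), mul_add]
    push_cast
    rw [add_sub_cancel_right] at hstep
    linarith

lemma le_mul_rpow_neg_of_mul_div_rpow_mul_le {C p a b x y : ℝ} (hC : 0 < C) (ha : 0 < a)
    (hb : 0 < b) (h : C * (a / b) ^ p * x ≤ y) : x ≤ y / C * b ^ p * a ^ (-p) := by
  rw [Real.div_rpow ha.le hb.le] at h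
  have hap : 0 < a ^ p := Real.rpow_pos_of_pos ha p
  have hbp : 0 < b ^ p := Real.rpow_pos_of_pos hb p
  rw [Real.rpow_neg ha.le, ← div_eq_mul_inv, le_div_iff₀ hap, div_mul_eq_mul_div, le_div_iff₀ hC]
  rw [mul_div_assoc', div_mul_eq_mul_div, div_le_iff₀ hbp] at h
  linarith

theorem stmt_16_general (ξ : ℕ → ℝ)
    (hnn : ∀ n, 1 ≤ n → 0 ≤ ξ n)
    (C p : ℝ) (hC : 0 < C) (hp0 : 0 < p) (hp1 : p < 1)
    (h : ∀ m n : ℕ, 1 ≤ m → m ≤ n → C * ((m : ℝ) / n) ^ p * ξ m ≤ ξ n) :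
    ∀ n, 1 ≤ n → ces ξ n ≤ (1 / ((1 - p) * C)) * ξ n := by
  intro n hn
  have hn0 : (0 : ℝ) < n := by exact_mod_cast hn
  have hcoef : 0 ≤ ξ n / C * (n : ℝ) ^ p := by have := hnn n hn; positivity
  have hsum : ∑ j ∈ Finset.Icc 1 n, ξ j ≤ ξ n / C * (n : ℝ) ^ p * ((n : ℝ) ^ (1 - p) / (1 - p)) :=
    calc ∑ j ∈ Finset.Icc 1 n, ξ j
        ≤ ∑ j ∈ Finset.Icc 1 n, ξ n / C * (n : ℝ) ^ p * (j : ℝ) ^ (-p) := by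
          refine Finset.sum_le_sum fun j hj => ?_
          obtain ⟨hj1, hjn⟩ := Finset.mem_Icc.1 hj
          exact le_mul_rpow_neg_of_mul_div_rpow_mul_le hC (by exact_mod_cast hj1) hn0 (h j n hj1 hjn)
      _ ≤ ξ n / C * (n : ℝ) ^ p * ((n : ℝ) ^ (1 - p) / (1 - p)) := by
          rw [← Finset.mul_sum]
          refine mul_le_mul_of_nonneg_left ?_ hcoef
          rw [le_div_iff₀' (by linarith)]
          exact one_sub_mul_sum_rpow_neg_le hp0.le hp1.le n
  have hpow : (n : ℝ) ^ p * (n : ℝ) ^ (1 - p) = n := by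
    rw [← Real.rpow_add hn0, add_sub_cancel, Real.rpow_one]
  rw [ces, one_div, inv_mul_le_iff₀ hn0]
  calc _ ≤ _ := hsum
    _ = ξ n / C * ((n : ℝ) ^ p * (n : ℝ) ^ (1 - p)) / (1 - p) := by ring
    _ = n * (1 / ((1 - p) * C) * ξ n) := by rw [hpow]; field_simp

theorem stmt_16 (ξ : ℕ → ℝ)
    (hmono : ∀ n, 1 ≤ n → ξ (n + 1) ≤ ξ n)
    (hnn : ∀ n, 1 ≤ n → 0 ≤ ξ n)
    (C p : ℝ) (hC : 0 < C) (hp0 : 0 < p) (hp1 : p < 1)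
    (h : ∀ m n : ℕ, 1 ≤ m → m ≤ n → C * ((m : ℝ) / n) ^ p * ξ m ≤ ξ n) :
    ∀ n, 1 ≤ n → ces ξ n ≤ (1 / ((1 - p) * C)) * ξ n :=
  stmt_16_general ξ hnn C p hC hp0 hp1 h
end

section
/- Let ξ and η be two monotonizations of the same summable sequence of complex numbers: suppose ξ, η : ℕ → ℂ are rearrangements of each other, |ξ| and |η| are both nonincreasing, and ξ is summable. Then |(η_{a∞})_n - (ξ_{a∞})_n| ≤ 2|ξ_n| for all n, where (ζ_{a∞})_n := (1/n)∑_{j>n} ζ_j. -/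
open scoped BigOperators
open Filter

noncomputable def ainfC (ζ : ℕ → ℂ) (n : ℕ) : ℂ := (1 / (n : ℂ)) * ∑' k : ℕ, ζ (n + 1 + k)

/-!
With `f k = ξ (k + 1)` and `η (k + 1) = f (e k)`, the two tails beyond `n` differ by
`∑_{i < n} f i - ∑_{i ∈ e '' [0, n)} f i`, and only the terms outside the common part of the two
index sets survive: at most `n` on each side, each of norm at most `‖f n‖`. For the terms with
index in `e '' [0, n) \ [0, n)` this is monotonicity of `‖f‖`; the terms in `[0, n) \ e '' [0, n)`
are values `f (e m)` with `m ≥ n`, and `‖f (e m)‖ ≤ ‖f n‖` because by pigeonhole some `k ≤ n`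
has `e k ≥ n`.
-/

open Finset

lemma exists_le_le_apply_of_injective {e : ℕ → ℕ} (he : Function.Injective e) (n : ℕ) :
    ∃ k ≤ n, n ≤ e k := by
  by_contra! h
  have : #(range (n + 1)) ≤ #(range n) :=
    card_le_card_of_injOn e (fun k hk => by simpa using h k (by simpa [Nat.lt_succ_iff] using hk))
      he.injOn
  simp at this

lemma Antitone.apply_comp_le {α : Type*} [Preorder α] {u : ℕ → α} {e : ℕ → ℕ}
    (hu : Antitone u) (he : Function.Injective e) (hue : Antitone (u ∘ e)) (n : ℕ) :
    u (e n) ≤ u n := by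
  obtain ⟨k, hkn, hnk⟩ := exists_le_le_apply_of_injective he n
  calc u (e n) ≤ u (e k) := hue hkn
    _ ≤ u n := hu hnk

lemma tsum_comp_add_sub_tsum_add {E : Type*} [AddCommGroup E] [TopologicalSpace E]
    [IsTopologicalAddGroup E] [T2Space E] {f : ℕ → E} (hf : Summable f) (e : ℕ ≃ ℕ) (n : ℕ) :
    ∑' k, f (e (k + n)) - ∑' k, f (k + n) =
      ∑ i ∈ range n, f i - ∑ i ∈ (range n).map e.toEmbedding, f i := by
  have h := (e.summable_iff.2 hf).sum_add_tsum_nat_add n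
  simp only [Function.comp_apply] at h
  rw [e.tsum_eq f, ← hf.sum_add_tsum_nat_add n] at h
  rw [sum_map, sub_eq_sub_iff_add_eq_add, add_comm]
  exact h

lemma norm_tsum_comp_add_sub_tsum_add_le {E : Type*} [NormedAddCommGroup E] {f : ℕ → E}
    (hf : Summable f) (e : ℕ ≃ ℕ) (hfa : Antitone (‖f ·‖)) (hfe : Antitone fun k => ‖f (e k)‖)
    (n : ℕ) :
    ‖∑' k, f (e (k + n)) - ∑' k, f (k + n)‖ ≤ 2 * n * ‖f n‖ := by
  classical
  set A := range n
  set B := A.map e.toEmbedding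
  have hAB : ∀ i ∈ A \ B, ‖f i‖ ≤ ‖f n‖ := by
    intro i hi
    have hni : n ≤ e.symm i := by
      by_contra! h
      simp only [A, B, Finset.mem_sdiff, mem_map_equiv, mem_range] at hi
      exact hi.2 h
    calc ‖f i‖ = ‖f (e (e.symm i))‖ := by rw [e.apply_symm_apply]
      _ ≤ ‖f (e n)‖ := hfe hni
      _ ≤ ‖f n‖ := hfa.apply_comp_le e.injective hfe n
  have hBA : ∀ i ∈ B \ A, ‖f i‖ ≤ ‖f n‖ := by
    intro i hi
    simp only [A, Finset.mem_sdiff, mem_range, not_lt] at hi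
    exact hfa hi.2
  have hcardAB : #(A \ B) ≤ n := (card_le_card sdiff_subset).trans (card_range n).le
  have hcardBA : #(B \ A) ≤ n := (card_le_card sdiff_subset).trans (by simp [B, A])
  rw [tsum_comp_add_sub_tsum_add hf e n, ← sum_sdiff_sub_sum_sdiff]
  calc ‖∑ i ∈ A \ B, f i - ∑ i ∈ B \ A, f i‖
      ≤ ‖∑ i ∈ A \ B, f i‖ + ‖∑ i ∈ B \ A, f i‖ := norm_sub_le _ _
    _ ≤ #(A \ B) • ‖f n‖ + #(B \ A) • ‖f n‖ :=
        add_le_add ((norm_sum_le _ _).trans (sum_le_card_nsmul _ _ _ hAB))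
          ((norm_sum_le _ _).trans (sum_le_card_nsmul _ _ _ hBA))
    _ ≤ n • ‖f n‖ + n • ‖f n‖ := by gcongr
    _ = 2 * n * ‖f n‖ := by rw [nsmul_eq_mul]; ring

theorem stmt_18 (ξ η : ℕ → ℂ) (e : ℕ ≃ ℕ)
    (hre : ∀ n : ℕ, η (n + 1) = ξ (e n + 1))
    (hξmono : ∀ n, 1 ≤ n → ‖ξ (n + 1)‖ ≤ ‖ξ n‖)
    (hηmono : ∀ n, 1 ≤ n → ‖η (n + 1)‖ ≤ ‖η n‖)
    (hsum : Summable fun n : ℕ => ‖ξ (n + 1)‖) :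
    ∀ n, 1 ≤ n → ‖ainfC η n - ainfC ξ n‖ ≤ 2 * ‖ξ n‖ := by
  intro n hn
  set f : ℕ → ℂ := fun k => ξ (k + 1)
  have hfa : Antitone (‖f ·‖) := antitone_nat_of_succ_le fun k => hξmono (k + 1) (by omega)
  have hfe : Antitone fun k => ‖f (e k)‖ := by
    simpa only [f, ← hre] using antitone_nat_of_succ_le fun k => hηmono (k + 1) (by omega)
  have htail (ζ : ℕ → ℂ) : ∑' k, ζ (n + 1 + k) = ∑' k, ζ (k + n + 1) := by
    congr 1; ext k; rw [add_right_comm, add_comm n]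
  have hn' : (0 : ℝ) < n := by exact_mod_cast hn
  calc ‖ainfC η n - ainfC ξ n‖ = ‖∑' k, f (e (k + n)) - ∑' k, f (k + n)‖ / n := by
        simp only [ainfC, ← mul_sub, norm_mul, htail, hre, f]
        simp [div_eq_inv_mul]
    _ ≤ 2 * n * ‖f n‖ / n := by
        gcongr; exact norm_tsum_comp_add_sub_tsum_add_le hsum.of_norm e hfa hfe n
    _ = 2 * ‖ξ (n + 1)‖ := by field_simp; rfl
    _ ≤ 2 * ‖ξ n‖ := by gcongr; exact hξmono n hn
end

section
/- Let m_k = (k!)² and define η_j = 1/m_k² for m_{k-1} < j ≤ m_k (with m_0 = 1, η_1 = 1). Then η is nonincreasing, η_j ≤ 1/j² for all j, but it is not the case that η_j = o(1/j²); i.e., j² η_j does not tend to 0. -/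
open scoped BigOperators
open Filter

def mseq (k : ℕ) : ℕ := (Nat.factorial k) ^ 2

noncomputable def blk (j : ℕ) : ℕ :=
  Nat.find (⟨j, le_trans (Nat.self_le_factorial j) (Nat.le_self_pow two_ne_zero _)⟩ :
    ∃ k, j ≤ mseq k)

noncomputable def eta (j : ℕ) : ℝ := ((mseq (blk j) : ℝ) ^ 2)⁻¹

lemma mseq_pos (k : ℕ) : 0 < mseq k := pow_pos k.factorial_pos 2

lemma mseq_mono : Monotone mseq := fun _ _ h => Nat.pow_le_pow_left (Nat.factorial_le h) 2

lemma self_le_mseq (k : ℕ) : k ≤ mseq k :=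
  (Nat.self_le_factorial k).trans (Nat.le_self_pow two_ne_zero _)

lemma tendsto_mseq_atTop : Tendsto mseq atTop atTop :=
  tendsto_atTop_mono self_le_mseq tendsto_id

lemma le_mseq_blk (j : ℕ) : j ≤ mseq (blk j) := by
  unfold blk
  exact Nat.find_spec (p := fun k => j ≤ mseq k) _

lemma blk_le {j k : ℕ} (h : j ≤ mseq k) : blk j ≤ k :=
  Nat.find_le (p := fun k => j ≤ mseq k) h

lemma blk_mono : Monotone blk := fun _ _ hij => blk_le (hij.trans (le_mseq_blk _))

lemma mseq_blk_mseq (k : ℕ) : mseq (blk (mseq k)) = mseq k :=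
  le_antisymm (mseq_mono (blk_le le_rfl)) (le_mseq_blk _)

lemma eta_antitone : Antitone eta := fun i j hij => by
  unfold eta
  gcongr
  · exact_mod_cast pow_pos (mseq_pos _) 2
  · exact mseq_mono (blk_mono hij)

lemma eta_le_inv_sq {j : ℕ} (hj : 1 ≤ j) : eta j ≤ 1 / (j : ℝ) ^ 2 := by
  rw [eta, one_div]
  gcongr
  exact_mod_cast le_mseq_blk j

lemma sq_mul_eta_mseq (k : ℕ) : (mseq k : ℝ) ^ 2 * eta (mseq k) = 1 := by
  rw [eta, mseq_blk_mseq]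
  exact mul_inv_cancel₀ (by exact_mod_cast (pow_pos (mseq_pos k) 2).ne')

theorem stmt_19 :
    (∀ n, 1 ≤ n → eta (n + 1) ≤ eta n) ∧
    (∀ j, 1 ≤ j → eta j ≤ 1 / (j : ℝ) ^ 2) ∧
    ¬ Tendsto (fun j : ℕ => (j : ℝ) ^ 2 * eta j) atTop (nhds 0) := by
  refine ⟨fun n _ => eta_antitone n.le_succ, fun _ => eta_le_inv_sq, fun h => ?_⟩
  have h_one : Tendsto (fun _ : ℕ => (1 : ℝ)) atTop (nhds 0) := by
    simpa only [Function.comp_def, sq_mul_eta_mseq] using h.comp tendsto_mseq_atTop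
  exact one_ne_zero (tendsto_nhds_unique tendsto_const_nhds h_one)
end
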